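/- arXiv:1602.04863 — 5 statements merged into one kernel-verified Lean document; each statement's English description precedes it below -/
import Mathlib

section
/- Let G be a group acting on a connected graph Γ̂ with finite edge stabilisers and fine Γ̂. Then for any two distinct vertices u ≠ u' of Γ̂, the intersection of their G-stabilisers Stab(u) ∩ Stab(u') is finite. -/
open SimpleGraph

namespace StabAux

variable {V : Type*} {G : SimpleGraph V}

lemma append_isPath {a b c : V} {p : G.Walk a b} {q : G.Walk b c}
    (hp : p.IsPath) (hq : q.IsPath)
    (hdisj : ∀ x, x ∈ p.support → x ∈ q.support → x = b) : (p.append q).IsPath := by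
  induction p with
  | nil => simpa using hq
  | cons h p' ih =>
    rename_i a' d _
    rw [Walk.cons_append]
    rw [Walk.cons_isPath_iff] at hp
    refine Walk.IsPath.cons (ih hp.1 hq (fun x hx hx' => hdisj x (by simp [hx]) hx')) ?_
    rw [Walk.mem_support_append_iff]
    rintro (hmem | hmem)
    · exact hp.2 hmem
    · have := hdisj a' (by simp) hmem
      subst this
      exact hp.2 p'.end_mem_support

lemma exists_first_meet {a b : V} (S : Set V) (hb : b ∈ S) (p : G.Walk a b) :
    ∃ (m : V) (A : G.Walk a m), m ∈ S ∧ (∀ x ∈ A.support, x ∈ p.support) ∧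
      A.length ≤ p.length ∧ (∀ x ∈ A.support, x ∈ S → x = m) ∧
      (p.IsPath → A.IsPath) := by
  classical
  induction p with
  | nil =>
    exact ⟨_, Walk.nil, hb, by simp, le_refl _,
      fun x hx _ => by simpa using hx, fun _ => Walk.IsPath.nil⟩
  | cons h p' ih =>
    rename_i a' d e
    by_cases ha : a' ∈ S
    · exact ⟨_, Walk.nil, ha, by simp, by simp,
        fun x hx _ => by simpa using hx, fun _ => Walk.IsPath.nil⟩
    · obtain ⟨m, A, hmS, hsub, hlen, hmin, hpath⟩ := ih hb
      refine ⟨m, Walk.cons h A, hmS, ?_, by simpa using Nat.succ_le_succ hlen, ?_, ?_⟩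
      · intro x hx
        rw [Walk.support_cons, List.mem_cons] at hx
        rw [Walk.support_cons, List.mem_cons]
        rcases hx with rfl | hx
        · exact Or.inl rfl
        · exact Or.inr (hsub x hx)
      · intro x hx hxS
        rw [Walk.support_cons, List.mem_cons] at hx
        rcases hx with rfl | hx
        · exact absurd hxS ha
        · exact hmin x hx hxS
      · intro hP
        rw [Walk.cons_isPath_iff] at hP
        refine (hpath hP.1).cons ?_
        intro hmem
        exact hP.2 (hsub _ hmem)

lemma getVert_one_takeUntil [DecidableEq V] {u v m : V} (q : G.Walk u v)
    (hm : m ∈ q.support) (hmu : m ≠ u) :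
    (q.takeUntil m hm).getVert 1 = q.getVert 1 := by
  have hlen0 : (q.takeUntil m hm).length ≠ 0 :=
    fun h0 => hmu (Walk.eq_of_length_eq_zero h0).symm
  have h1 : ((q.takeUntil m hm).append (q.dropUntil m hm)).getVert 1 = q.getVert 1 := by
    rw [q.take_spec hm]
  rw [Walk.getVert_append] at h1
  by_cases hgt : 1 < (q.takeUntil m hm).length
  · rwa [if_pos hgt] at h1
  · have hlen1 : (q.takeUntil m hm).length = 1 := by omega
    rw [if_neg hgt, hlen1] at h1
    simp only [Nat.sub_self, Walk.getVert_zero] at h1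
    rw [← h1, ← hlen1, Walk.getVert_length]

lemma cycle_exists {u v x1 y1 : V}
    (h : G.Adj u x1) (h' : G.Adj u y1) (p' : G.Walk x1 v) (q' : G.Walk y1 v)
    (hp : (Walk.cons h p').IsPath) (hq : (Walk.cons h' q').IsPath) (hxy : y1 ≠ x1) :
    ∃ c : G.Walk u u, c.IsCycle ∧ s(u, x1) ∈ c.edges ∧
      c.length ≤ p'.length + q'.length + 2 ∧ c.reverse.getVert 1 = y1 := by
  classical
  set q : G.Walk u v := Walk.cons h' q' with hqdef
  obtain ⟨m, A, hmS, hsub, hlen, hmin, hApath⟩ :=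
    exists_first_meet {x | x ∈ q.support} (by simp) p'
  have hp' : p'.IsPath := hp.of_cons
  have hup' : u ∉ p'.support := ((Walk.cons_isPath_iff h p').mp hp).2
  have hA : A.IsPath := hApath hp'
  have hmu : m ≠ u := by
    intro hmeq
    apply hup'
    rw [← hmeq]
    exact hsub m A.end_mem_support
  set B : G.Walk u m := q.takeUntil m hmS with hBdef
  have hBpath : B.IsPath := hq.takeUntil hmS
  have hBsub : ∀ x ∈ B.support, x ∈ q.support := fun x hx => q.support_takeUntil_subset hmS hx
  have hBne : B.length ≠ 0 := fun h0 => hmu (Walk.eq_of_length_eq_zero h0).symm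
  have hW : (A.append B.reverse).IsPath := by
    refine append_isPath hA hBpath.reverse ?_
    intro x hx hx'
    rw [Walk.support_reverse, List.mem_reverse] at hx'
    exact hmin x hx (hBsub x hx')
  have hedge : s(u, x1) ∉ (A.append B.reverse).edges := by
    rw [Walk.edges_append, List.mem_append]
    rintro (he | he)
    · exact hup' (hsub u (Walk.fst_mem_support_of_mem_edges A he))
    · rw [Walk.edges_reverse, List.mem_reverse] at he
      have he' : s(u, x1) ∈ q.edges := q.edges_takeUntil_subset hmS he
      rw [hqdef, Walk.edges_cons, List.mem_cons] at he'
      rcases he' with he' | he'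
      · rw [Sym2.congr_right] at he'
        exact hxy he'.symm
      · exact ((Walk.cons_isPath_iff h' q').mp hq).2
          (Walk.fst_mem_support_of_mem_edges q' he')
  refine ⟨Walk.cons h (A.append B.reverse), ?_, ?_, ?_, ?_⟩
  · exact (Walk.cons_isCycle_iff _ h).mpr ⟨hW, hedge⟩
  · simp
  · have hBle : B.length ≤ q.length := q.length_takeUntil_le hmS
    have hqlen : q.length = q'.length + 1 := by rw [hqdef, Walk.length_cons]
    simp only [Walk.length_cons, Walk.length_append, Walk.length_reverse]
    omega
  · rw [Walk.getVert_reverse]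
    have hidx : (Walk.cons h (A.append B.reverse)).length - 1
        = (A.length + (B.length - 1)) + 1 := by
      simp only [Walk.length_cons, Walk.length_append, Walk.length_reverse]
      omega
    rw [hidx, Walk.getVert_cons_succ, Walk.getVert_append, if_neg (by omega),
      Walk.getVert_reverse]
    have heq : B.length - (A.length + (B.length - 1) - A.length) = 1 := by omega
    rw [heq, hBdef, getVert_one_takeUntil q hmS hmu, hqdef,
      show (1 : ℕ) = 0 + 1 from rfl, Walk.getVert_cons_succ, Walk.getVert_zero]

end StabAux



/-- A graph is fine if for every edge `uv` and every `n`, there are only finitely many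
circuits (cycles) of length at most `n` containing the edge `uv`. -/
def SimpleGraph.Fine {V : Type*} (G : SimpleGraph V) : Prop :=
  ∀ ⦃u v : V⦄, G.Adj u v → ∀ n : ℕ,
    {p : G.Walk u u | p.IsCycle ∧ s(u, v) ∈ p.edges ∧ p.length ≤ n}.Finite

/-- If a group `Γ` acts by automorphisms on a connected fine graph with finite edge
stabilisers, then for any two distinct vertices the intersection of their stabilisers
is finite. -/
theorem stabiliser_intersection_finite {V : Type*} {Γ : Type*} [Group Γ] [MulAction Γ V]
    (G : SimpleGraph V) (hconn : G.Connected) (hfine : G.Fine)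
    (hact : ∀ (g : Γ) ⦃u v : V⦄, G.Adj u v → G.Adj (g • u) (g • v))
    (hstab : ∀ ⦃u v : V⦄, G.Adj u v → {g : Γ | g • u = u ∧ g • v = v}.Finite) :
    ∀ u u' : V, u ≠ u' → {g : Γ | g • u = u ∧ g • u' = u'}.Finite := by
  classical
  intro u u' huu'
  obtain ⟨p0⟩ := hconn u u'
  obtain ⟨x1, h, p', hcons⟩ := SimpleGraph.Walk.exists_eq_cons_of_ne huu' p0.bypass
  have hp : (SimpleGraph.Walk.cons h p').IsPath := hcons ▸ p0.bypass_isPath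
  have hup' : u ∉ p'.support := ((SimpleGraph.Walk.cons_isPath_iff h p').mp hp).2
  set C : Set (G.Walk u u) :=
    {c : G.Walk u u | c.IsCycle ∧ s(u, x1) ∈ c.edges ∧
      c.length ≤ p'.length + p'.length + 2} with hCdef
  have hC : C.Finite := hfine h _
  set O : Set V := {y : V | ∃ (h' : G.Adj u y) (q' : G.Walk y u'),
    (SimpleGraph.Walk.cons h' q').IsPath ∧ q'.length = p'.length} with hOdef
  have hO : O.Finite := by
    apply Set.Finite.subset
      ((hC.image (fun c => c.reverse.getVert 1)).insert x1)
    rintro y ⟨h', q', hq, hlen⟩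
    rw [Set.mem_insert_iff]
    by_cases hy : y = x1
    · exact Or.inl hy
    · obtain ⟨c, hc1, hc2, hc3, hc4⟩ := StabAux.cycle_exists h h' p' q' hp hq hy
      exact Or.inr ⟨c, ⟨hc1, hc2, by omega⟩, hc4⟩
  have htrans : ∀ g : Γ, g • u = u → g • u' = u' → g • x1 ∈ O := by
    intro g hg1 hg2
    let f : G →g G := ⟨fun v => g • v, fun hab => hact g hab⟩
    have hfi : Function.Injective (f : V → V) := MulAction.injective g
    have h' : G.Adj u (g • x1) := by
      have := hact g h
      rwa [hg1] at this
    refine ⟨h', (p'.map f).copy rfl hg2, ?_, by simp⟩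
    rw [SimpleGraph.Walk.cons_isPath_iff]
    constructor
    · rw [SimpleGraph.Walk.isPath_copy]
      exact SimpleGraph.Walk.map_isPath_of_injective hfi hp.of_cons
    intro hmem
    rw [SimpleGraph.Walk.support_copy, SimpleGraph.Walk.support_map] at hmem
    obtain ⟨z, hz, hz'⟩ := List.mem_map.mp hmem
    have : z = u := MulAction.injective g (show g • z = g • u by rw [hg1]; exact hz')
    exact hup' (this ▸ hz)
  have key : {g : Γ | g • u = u ∧ g • u' = u'} ⊆
      ⋃ y ∈ O, {g : Γ | (g • u = u ∧ g • u' = u') ∧ g • x1 = y} := by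
    intro g hg
    exact Set.mem_biUnion (htrans g hg.1 hg.2) ⟨hg, rfl⟩
  refine Set.Finite.subset (Set.Finite.biUnion hO ?_) key
  intro y _
  by_cases hne : {g : Γ | (g • u = u ∧ g • u' = u') ∧ g • x1 = y}.Nonempty
  · obtain ⟨g0, hg0⟩ := hne
    apply Set.Finite.subset ((hstab h).image (fun t => g0 * t))
    intro g hg
    refine ⟨g0⁻¹ * g, ⟨?_, ?_⟩, by group⟩
    · rw [mul_smul, hg.1.1, inv_smul_eq_iff, hg0.1.1]
    · rw [mul_smul, hg.2, inv_smul_eq_iff, hg0.2]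
  · rw [Set.not_nonempty_iff_eq_empty] at hne
    rw [hne]
    exact Set.finite_empty
end

section
/- Let Γ be a finite simple graph and suppose its vertex set can be ordered a_1, ..., a_k such that for each i < k, the vertex a_i is dominated in the induced subgraph on {a_i, ..., a_k} (i.e. Γ is dismantlable). Then the flag complex Γ^▲ of Γ is contractible. -/
/-- A vertex `a` is dominated in the subgraph induced on `S` by some vertex `z ≠ a`
adjacent to `a`, such that every vertex of `S` adjacent to `a` equals `z` or is adjacent
to `z`. -/
def DominatedIn {V : Type*} (G : SimpleGraph V) (S : Set V) (a : V) : Prop :=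
  ∃ z ∈ S, z ≠ a ∧ G.Adj a z ∧ ∀ v ∈ S, G.Adj a v → v = z ∨ G.Adj z v

/-- A finite graph is dismantlable if its vertices can be ordered `a_1, ..., a_k` so that
each `a_i` with `i < k` is dominated in the subgraph induced on `{a_i, ..., a_k}`. -/
def Dismantlable {V : Type*} (G : SimpleGraph V) : Prop :=
  ∃ (k : ℕ) (e : V ≃ Fin k), ∀ i : Fin k, (i : ℕ) < k - 1 →
    DominatedIn G {v | i ≤ e v} (e.symm i)


section Aux
set_option linter.unusedSectionVars false

variable {V : Type*} [Fintype V] [DecidableEq V] (G : SimpleGraph V) {k : ℕ} (e : V ≃ Fin k)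
  (z : Fin k → V)

def MemX (y : V → ℝ) : Prop :=
  (∀ v, 0 ≤ y v) ∧ (∑ v, y v) = 1 ∧ G.IsClique {v | y v ≠ 0}

def PP (n : ℕ) (y : V → ℝ) : Prop :=
  MemX G y ∧ ∀ v, y v ≠ 0 → n ≤ (e v : ℕ)

def Ft (t : ℝ) (n : ℕ) (y : V → ℝ) : V → ℝ :=
  if h : n < k - 1 then
    fun v => y v + t * y (e.symm ⟨n, by omega⟩) *
      ((if v = z ⟨n, by omega⟩ then 1 else 0) - (if v = e.symm ⟨n, by omega⟩ then 1 else 0))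
  else y

lemma pres {n : ℕ} (hn : n < k - 1)
    (hzd : z ⟨n, by omega⟩ ∈ {v | (⟨n, by omega⟩ : Fin k) ≤ e v} ∧
      z ⟨n, by omega⟩ ≠ e.symm ⟨n, by omega⟩ ∧
      G.Adj (e.symm ⟨n, by omega⟩) (z ⟨n, by omega⟩) ∧
      ∀ v ∈ {v | (⟨n, by omega⟩ : Fin k) ≤ e v}, G.Adj (e.symm ⟨n, by omega⟩) v →
        v = z ⟨n, by omega⟩ ∨ G.Adj (z ⟨n, by omega⟩) v)
    {t : ℝ} (ht0 : 0 ≤ t) (ht1 : t ≤ 1) {y : V → ℝ} (hy : PP G e n y) :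
    PP G e n (Ft e z t n y) ∧ (t = 1 → PP G e (n+1) (Ft e z t n y)) := by
  set i : Fin k := ⟨n, by omega⟩ with hi
  set a : V := e.symm i with ha
  set w : V := z i with hw
  obtain ⟨hwS, hwa, hadj, hdom⟩ := hzd
  obtain ⟨⟨hpos, hsum, hclq⟩, hsupp⟩ := hy
  have haw : a ≠ w := fun h => hwa h.symm
  have hne_a : ∀ v : V, v ≠ a → (e v : ℕ) ≠ n := by
    intro v hva hev
    exact hva (by rw [ha, hi]; exact (Equiv.symm_apply_apply e v).symm.trans (by
      congr 1; exact Fin.ext hev))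
  by_cases hya : y a = 0
  · have hFy : Ft e z t n y = y := by
      rw [Ft, dif_pos hn]
      funext v
      rw [show y (e.symm ⟨n, by omega⟩) = 0 from hya]
      ring
    rw [hFy]
    refine ⟨⟨⟨hpos, hsum, hclq⟩, hsupp⟩, fun _ => ⟨⟨hpos, hsum, hclq⟩, ?_⟩⟩
    intro v hv
    have h1 := hsupp v hv
    have h2 : v ≠ a := fun hva => hv (hva ▸ hya)
    have := hne_a v h2
    omega
  · have hFt : Ft e z t n y = fun v => y v + t * y a *
        ((if v = w then 1 else 0) - (if v = a then 1 else 0)) := by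
      rw [Ft, dif_pos hn]
    have hFa : Ft e z t n y a = (1 - t) * y a := by
      rw [hFt]; simp [if_neg haw]; ring
    have hFw : Ft e z t n y w = y w + t * y a := by
      rw [hFt]; simp [if_neg hwa]
    have hFo : ∀ v, v ≠ a → v ≠ w → Ft e z t n y v = y v := by
      intro v hva hvw
      rw [hFt]; simp [if_neg hva, if_neg hvw]
    have hpos' : ∀ v, 0 ≤ Ft e z t n y v := by
      intro v
      by_cases hva : v = a
      · subst hva; rw [hFa]; have := hpos a; nlinarith
      by_cases hvw : v = w
      · subst hvw; rw [hFw]; have := hpos w; have := hpos a; nlinarith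
      · rw [hFo v hva hvw]; exact hpos v
    have hsum' : (∑ v, Ft e z t n y v) = 1 := by
      rw [hFt, Finset.sum_add_distrib, hsum, ← Finset.mul_sum,
        Finset.sum_sub_distrib, Finset.sum_ite_eq', Finset.sum_ite_eq']
      simp
    have hsub : {v | Ft e z t n y v ≠ 0} ⊆ {v | y v ≠ 0} ∪ {w} := by
      intro v hv
      by_cases hva : v = a
      · subst hva; rw [Set.mem_setOf_eq, hFa] at hv
        left; exact fun h0 => hv (by rw [h0]; ring)
      by_cases hvw : v = w
      · right; exact hvw
      · left; rw [Set.mem_setOf_eq, hFo v hva hvw] at hv; exact hv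
    have hclqU : G.IsClique ({v | y v ≠ 0} ∪ {w}) := by
      intro u hu v hv huv
      have haS : a ∈ {v | y v ≠ 0} := hya
      rcases hu with hu | hu <;> rcases hv with hv | hv
      · exact hclq hu hv huv
      · rcases hv with rfl
        by_cases hua : u = a
        · subst hua; exact hadj
        · have hSu : i ≤ e u := by rw [Fin.le_def]; exact hsupp u hu
          have : G.Adj a u := hclq haS hu (fun h => hua h.symm)
          rcases hdom u hSu this with h | h
          · exact absurd h huv
          · exact h.symm
      · rcases hu with rfl
        by_cases hva : v = a
        · subst hva; exact hadj.symm
        · have hSv : i ≤ e v := by rw [Fin.le_def]; exact hsupp v hv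
          have : G.Adj a v := hclq haS hv (fun h => hva h.symm)
          rcases hdom v hSv this with h | h
          · exact absurd h.symm huv
          · exact h
      · rcases hu with rfl; rcases hv with rfl; exact absurd rfl huv
    have hclq' : G.IsClique {v | Ft e z t n y v ≠ 0} := hclqU.subset hsub
    have hsupp' : ∀ v, Ft e z t n y v ≠ 0 → n ≤ (e v : ℕ) := by
      intro v hv
      rcases hsub hv with h | h
      · exact hsupp v h
      · rcases h with rfl
        rw [Set.mem_setOf_eq, Fin.le_def] at hwS; exact hwS
    refine ⟨⟨⟨hpos', hsum', hclq'⟩, hsupp'⟩, fun ht => ?_⟩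
    subst ht
    refine ⟨⟨hpos', hsum', hclq'⟩, fun v hv => ?_⟩
    have h1 := hsupp' v hv
    have h2 : v ≠ a := by
      intro hva; subst hva
      rw [hFa] at hv; exact hv (by ring)
    have := hne_a v h2
    omega

end Aux

section More
set_option linter.unusedSectionVars false
variable {V : Type*} [Fintype V] [DecidableEq V] (G : SimpleGraph V) {k : ℕ} (e : V ≃ Fin k)
  (z : Fin k → V)

def Gg : ℕ → (V → ℝ) → (V → ℝ)
  | 0 => id
  | (n+1) => fun y => Ft e z 1 n (Gg n y)

lemma Ft_cont (n : ℕ) : Continuous (fun p : ℝ × (V → ℝ) => Ft e z p.1 n p.2) := by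
  unfold Ft
  split_ifs
  · exact continuous_pi fun v => by fun_prop
  · fun_prop

lemma Gg_cont (n : ℕ) : Continuous (Gg e z n) := by
  induction n with
  | zero => exact continuous_id
  | succ n ih =>
    have h2 : Continuous fun y : V → ℝ => Ft e z 1 n y :=
      (Ft_cont e z n).comp (by fun_prop : Continuous fun y : V → ℝ => ((1:ℝ), y))
    exact h2.comp ih

variable (hz : ∀ (n : ℕ) (hn : n < k - 1),
    z ⟨n, by omega⟩ ∈ {v | (⟨n, by omega⟩ : Fin k) ≤ e v} ∧
      z ⟨n, by omega⟩ ≠ e.symm ⟨n, by omega⟩ ∧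
      G.Adj (e.symm ⟨n, by omega⟩) (z ⟨n, by omega⟩) ∧
      ∀ v ∈ {v | (⟨n, by omega⟩ : Fin k) ≤ e v}, G.Adj (e.symm ⟨n, by omega⟩) v →
        v = z ⟨n, by omega⟩ ∨ G.Adj (z ⟨n, by omega⟩) v)

include hz in
lemma Pg : ∀ n, n ≤ k - 1 → ∀ y : V → ℝ, PP G e 0 y → PP G e n (Gg e z n y) := by
  intro n
  induction n with
  | zero => intro _ y hy; exact hy
  | succ n ih =>
    intro hn y hy
    have hn' : n < k - 1 := by omega
    have h1 := ih (by omega) y hy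
    exact (pres G e z hn' (hz n hn') zero_le_one le_rfl h1).2 rfl

lemma endpoint (hk : 0 < k) {y : V → ℝ} (hy : PP G e (k-1) y) :
    y = fun v => if v = e.symm ⟨k-1, by omega⟩ then 1 else 0 := by
  set a : V := e.symm ⟨k-1, by omega⟩ with ha
  obtain ⟨⟨hpos, hsum, _⟩, hsupp⟩ := hy
  have hzero : ∀ v, v ≠ a → y v = 0 := by
    intro v hva
    by_contra h
    have h1 := hsupp v h
    have h2 : (e v : ℕ) < k := (e v).isLt
    have h3 : (e v : ℕ) = k - 1 := by omega
    exact hva (by rw [ha]; exact (Equiv.symm_apply_apply e v).symm.trans (by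
      congr 1; exact Fin.ext h3))
  have hya : y a = 1 := by
    rw [← hsum, Finset.sum_eq_single a (fun v _ hva => hzero v hva) (by simp)]
  funext v
  by_cases hva : v = a
  · subst hva; simp [hya]
  · simp [if_neg hva, hzero v hva]

end More

section Main
set_option linter.unusedSectionVars false
variable {V : Type*} [Fintype V] [DecidableEq V] {k : ℕ} (e : V ≃ Fin k) (z : Fin k → V)

lemma Ft_zero (n : ℕ) (y : V → ℝ) : Ft e z 0 n y = y := by
  unfold Ft
  split_ifs
  · funext v; ring
  · rfl

end Main

/-- The flag complex of a finite dismantlable (simple) graph is contractible. Here the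
flag complex is realized geometrically inside `V → ℝ` as the set of convex combinations
of vertices whose support is a clique. -/
theorem flag_complex_of_dismantlable_contractible {V : Type*} [Fintype V] [Nonempty V]
    (G : SimpleGraph V) (hd : Dismantlable G) :
    ContractibleSpace {x : V → ℝ // (∀ v, 0 ≤ x v) ∧ (∑ v, x v) = 1 ∧
      G.IsClique {v | x v ≠ 0}} := by
  classical
  obtain ⟨k, e, hd⟩ := hd
  have hk : 0 < k := Fin.pos_iff_nonempty.mpr ⟨e (Classical.arbitrary V)⟩
  set X := {x : V → ℝ // (∀ v, 0 ≤ x v) ∧ (∑ v, x v) = 1 ∧ G.IsClique {v | x v ≠ 0}} with hX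
  -- choose the dominating vertices
  have hd' : ∀ (n : ℕ) (hn : n < k - 1), ∃ w : V, w ∈ {v | (⟨n, by omega⟩ : Fin k) ≤ e v} ∧
      w ≠ e.symm ⟨n, by omega⟩ ∧ G.Adj (e.symm ⟨n, by omega⟩) w ∧
      ∀ v ∈ {v | (⟨n, by omega⟩ : Fin k) ≤ e v}, G.Adj (e.symm ⟨n, by omega⟩) v →
        v = w ∨ G.Adj w v := by
    intro n hn
    obtain ⟨w, hw1, hw2, hw3, hw4⟩ := hd ⟨n, by omega⟩ hn
    exact ⟨w, hw1, hw2, hw3, hw4⟩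
  set z : Fin k → V := fun i => if h : (i : ℕ) < k - 1 then Classical.choose (hd' i h)
    else Classical.arbitrary V with hzdef
  have hz : ∀ (n : ℕ) (hn : n < k - 1),
      z ⟨n, by omega⟩ ∈ {v | (⟨n, by omega⟩ : Fin k) ≤ e v} ∧
        z ⟨n, by omega⟩ ≠ e.symm ⟨n, by omega⟩ ∧
        G.Adj (e.symm ⟨n, by omega⟩) (z ⟨n, by omega⟩) ∧
        ∀ v ∈ {v | (⟨n, by omega⟩ : Fin k) ≤ e v}, G.Adj (e.symm ⟨n, by omega⟩) v →
          v = z ⟨n, by omega⟩ ∨ G.Adj (z ⟨n, by omega⟩) v := by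
    intro n hn
    have : z ⟨n, by omega⟩ = Classical.choose (hd' n hn) := by
      rw [hzdef]; exact dif_pos hn
    rw [this]
    exact Classical.choose_spec (hd' n hn)
  have hP0 : ∀ x : X, PP G e 0 x.val := fun x => ⟨x.2, fun v _ => Nat.zero_le _⟩
  have key : ∀ n, n ≤ k - 1 → ∃ f : C(X, X), (∀ x : X, (f x).val = Gg e z n x.val) ∧
      (ContinuousMap.id X).Homotopic f := by
    intro n
    induction n with
    | zero => exact fun _ => ⟨ContinuousMap.id X, fun x => rfl, ContinuousMap.Homotopic.refl _⟩
    | succ n ih =>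
      intro hn
      have hn' : n < k - 1 := by omega
      obtain ⟨f, hf, hhom⟩ := ih (by omega)
      have hmem : ∀ (t : ℝ), 0 ≤ t → t ≤ 1 → ∀ x : X, MemX G (Ft e z t n (Gg e z n x.val)) :=
        fun t ht0 ht1 x =>
          (pres G e z hn' (hz n hn') ht0 ht1 (Pg G e z hz n (by omega) x.val (hP0 x))).1.1
      have hmem' : ∀ x : X, (∀ v, 0 ≤ Gg e z (n+1) x.val v) ∧
          (∑ v, Gg e z (n+1) x.val v) = 1 ∧ G.IsClique {v | Gg e z (n+1) x.val v ≠ 0} :=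
        fun x => hmem 1 zero_le_one le_rfl x
      let f' : C(X, X) := ⟨fun x => ⟨Gg e z (n+1) x.val, hmem' x⟩,
        Continuous.subtype_mk ((Gg_cont e z (n+1)).comp continuous_subtype_val) hmem'⟩
      have H : ContinuousMap.Homotopy f f' :=
        { toFun := fun p => ⟨Ft e z (p.1 : ℝ) n (Gg e z n p.2.val),
            hmem _ p.1.2.1 p.1.2.2 p.2⟩
          continuous_toFun := by
            refine Continuous.subtype_mk ?_ _
            exact (Ft_cont e z n).comp
              ((continuous_subtype_val.comp continuous_fst).prodMk
                ((Gg_cont e z n).comp (continuous_subtype_val.comp continuous_snd)))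
          map_zero_left := fun x => Subtype.ext (by
            simp only [Set.Icc.coe_zero, Ft_zero]
            exact (hf x).symm)
          map_one_left := fun x => Subtype.ext rfl }
      exact ⟨f', fun x => rfl, hhom.trans ⟨H⟩⟩
  obtain ⟨f, hf, hhom⟩ := key (k - 1) le_rfl
  set a : V := e.symm ⟨k - 1, by omega⟩ with hadef
  have hptmem : (∀ v, 0 ≤ (fun v => if v = a then (1:ℝ) else 0) v) ∧
      (∑ v, (fun v => if v = a then (1:ℝ) else 0) v) = 1 ∧
      G.IsClique {v | (fun v => if v = a then (1:ℝ) else 0) v ≠ 0} := by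
    refine ⟨fun v => by positivity, by simp [Finset.sum_ite_eq'], ?_⟩
    have : {v | (if v = a then (1:ℝ) else 0) ≠ 0} = {a} := by
      ext v; by_cases h : v = a <;> simp [h]
    rw [this]
    exact Set.pairwise_singleton a G.Adj
  have hfc : f = ContinuousMap.const X ⟨fun v => if v = a then 1 else 0, hptmem⟩ := by
    ext x : 1
    refine Subtype.ext ?_
    rw [hf x]
    exact endpoint G e hk (Pg G e z hz (k-1) le_rfl x.val (hP0 x))
  rw [contractible_iff_id_nullhomotopic]
  exact ⟨_, hfc ▸ hhom⟩
end

section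
/- Let Γ be a finite dismantlable graph and H a subgroup of its automorphism group. Then the fixed-point set (Γ^▲)^H of the induced H-action on the geometric realization of the flag complex Γ^▲ is nonempty and contractible. -/
set_option linter.unusedSectionVars false
set_option linter.unusedVariables false

namespace FixedPtAux

open Finset
open scoped Classical

variable {V : Type*} [Fintype V] [DecidableEq V]

/-- Closed neighborhood of `u` within `S`. -/
noncomputable def NS (G : SimpleGraph V) (S : Finset V) (u : V) : Finset V :=
  S.filter fun v => v = u ∨ G.Adj u v

/-- Inductive form of dismantlability of the subgraph induced on a finset. -/
inductive Dism (G : SimpleGraph V) : Finset V → Prop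
  | single (a : V) : Dism G {a}
  | cons (S : Finset V) (a : V) (ha : a ∈ S) (hdom : DominatedIn G (↑S) a)
      (h : Dism G (S.erase a)) : Dism G S

theorem Dism.nonempty {G : SimpleGraph V} {S : Finset V} (h : Dism G S) : S.Nonempty := by
  cases h with
  | single a => exact ⟨a, mem_singleton_self a⟩
  | cons S a ha _ _ => exact ⟨a, ha⟩

theorem mem_NS {G : SimpleGraph V} {S : Finset V} {u v : V} :
    v ∈ NS G S u ↔ v ∈ S ∧ (v = u ∨ G.Adj u v) := by
  simp [NS]

theorem self_mem_NS {G : SimpleGraph V} {S : Finset V} {u : V} (hu : u ∈ S) :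
    u ∈ NS G S u := mem_NS.2 ⟨hu, Or.inl rfl⟩

theorem NS_subset_of_dom {G : SimpleGraph V} {S : Finset V} {a z : V}
    (hz : z ∈ S) (hza : z ≠ a) (hadj : G.Adj a z)
    (hdom : ∀ v ∈ (S : Set V), G.Adj a v → v = z ∨ G.Adj z v) :
    NS G S a ⊆ NS G S z := by
  intro v hv
  rcases mem_NS.1 hv with ⟨hvS, hv2⟩
  refine mem_NS.2 ⟨hvS, ?_⟩
  rcases hv2 with rfl | hadj2
  · exact Or.inr hadj.symm
  · exact hdom v hvS hadj2

theorem NS_erase {G : SimpleGraph V} {S : Finset V} {c u : V} :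
    NS G (S.erase c) u = (NS G S u).erase c := by
  ext v
  simp [mem_NS, Finset.mem_erase]
  tauto

/-- Transport of dismantlability along a partial isomorphism. -/
theorem dismMap {G : SimpleGraph V} {S : Finset V} (hD : Dism G S) :
    ∀ e : V ≃ V, (∀ u ∈ S, ∀ v ∈ S, G.Adj u v ↔ G.Adj (e u) (e v)) →
    Dism G (S.image e) := by
  induction hD with
  | single a =>
    intro e _
    rw [Finset.image_singleton]
    exact Dism.single (e a)
  | cons S a ha hdom hsub IH =>
    intro e he
    obtain ⟨z, hzS, hza, hadj, hrest⟩ := hdom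
    refine Dism.cons _ (e a) (Finset.mem_image_of_mem e ha) ?_ ?_
    · refine ⟨e z, Finset.mem_image_of_mem e hzS, fun h => hza (e.injective h), (he a ha z hzS).1 hadj, ?_⟩
      intro v hv hadjv
      rcases Finset.mem_image.1 hv with ⟨u, huS, rfl⟩
      have : G.Adj a u := (he a ha u huS).2 hadjv
      rcases hrest u huS this with rfl | h2
      · exact Or.inl rfl
      · exact Or.inr ((he z hzS u huS).1 h2)
    · have himg : (S.image e).erase (e a) = (S.erase a).image e := by
        rw [Finset.image_erase e.injective]
      rw [himg]
      exact IH e fun u hu v hv => he u (Finset.mem_of_mem_erase hu) v (Finset.mem_of_mem_erase hv)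

/-- Removing any dominated vertex preserves dismantlability. -/
theorem dismErase {G : SimpleGraph V} {S : Finset V} (hD : Dism G S) :
    ∀ b ∈ S, DominatedIn G (↑S) b → Dism G (S.erase b) := by
  induction hD with
  | single a =>
    intro b hb hdom
    obtain ⟨z, hz, hza, _, _⟩ := hdom
    rw [Finset.mem_singleton] at hb
    rw [Finset.coe_singleton, Set.mem_singleton_iff] at hz
    exact absurd (hz.trans hb.symm) hza
  | cons S a haS hdomA hsub IH =>
    intro b hbS hdomB
    by_cases hba : b = a
    · subst hba; exact hsub
    obtain ⟨z, hzS', hza, haz, hdz⟩ := hdomA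
    obtain ⟨w, hwS', hwb, hbw, hdw⟩ := hdomB
    have hzS : z ∈ S := hzS'
    have hwS : w ∈ S := hwS'
    have hbea : b ∈ S.erase a := Finset.mem_erase.2 ⟨hba, hbS⟩
    have haeb : a ∈ S.erase b := Finset.mem_erase.2 ⟨fun h => hba h.symm, haS⟩
    by_cases hwa : w = a
    · rw [hwa] at hbw hdw
      by_cases hzb : z = b
      · rw [hzb] at haz hdz
        -- mutual domination of a and b; transport along the swap
        have key : ∀ v ∈ S, v ≠ a → v ≠ b → (G.Adj b v ↔ G.Adj a v) := by
          intro v hv hva hvb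
          constructor
          · intro h
            rcases hdw v (Finset.mem_coe.2 hv) h with h' | h'
            · exact absurd h' hva
            · exact h'
          · intro h
            rcases hdz v (Finset.mem_coe.2 hv) h with h' | h'
            · exact absurd h' hvb
            · exact h'
        have himg : (S.erase a).image (Equiv.swap a b) = S.erase b := by
          ext x
          simp only [Finset.mem_image, Finset.mem_erase]
          constructor
          · rintro ⟨v, ⟨hva, hvS⟩, rfl⟩
            by_cases hvb : v = b
            · subst hvb
              rw [Equiv.swap_apply_right]
              exact ⟨fun h => hba h.symm, haS⟩
            · rw [Equiv.swap_apply_of_ne_of_ne hva hvb]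
              exact ⟨hvb, hvS⟩
          · rintro ⟨hxb, hxS⟩
            by_cases hxa : x = a
            · refine ⟨b, ⟨hba, hbS⟩, ?_⟩
              rw [hxa]
              exact Equiv.swap_apply_right a b
            · exact ⟨x, ⟨hxa, hxS⟩, Equiv.swap_apply_of_ne_of_ne hxa hxb⟩
        have hadjiff : ∀ u ∈ S.erase a, ∀ v ∈ S.erase a,
            G.Adj u v ↔ G.Adj (Equiv.swap a b u) (Equiv.swap a b v) := by
          intro u hu v hv
          rcases Finset.mem_erase.1 hu with ⟨hua, huS⟩
          rcases Finset.mem_erase.1 hv with ⟨hva, hvS⟩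
          by_cases hub : u = b <;> by_cases hvb : v = b
          · subst hub; subst hvb
            rw [Equiv.swap_apply_right]
            exact iff_of_false (G.irrefl) (G.irrefl)
          · subst hub
            rw [Equiv.swap_apply_right, Equiv.swap_apply_of_ne_of_ne hva hvb]
            exact key v hvS hva hvb
          · subst hvb
            rw [Equiv.swap_apply_right, Equiv.swap_apply_of_ne_of_ne hua hub]
            constructor
            · intro h; exact ((key u huS hua hub).1 h.symm).symm
            · intro h; exact ((key u huS hua hub).2 h.symm).symm
          · rw [Equiv.swap_apply_of_ne_of_ne hua hub, Equiv.swap_apply_of_ne_of_ne hva hvb]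
        have := dismMap hsub (Equiv.swap a b) hadjiff
        rwa [himg] at this
      · -- w = a, z ≠ b
        have hb' : DominatedIn G (↑(S.erase a)) b := by
          refine ⟨z, Finset.mem_coe.2 (Finset.mem_erase.2 ⟨hza, hzS⟩), hzb, ?_, ?_⟩
          · rcases hdz b (Finset.mem_coe.2 hbS) hbw.symm with h | h
            · exact absurd h (Ne.symm hzb)
            · exact h.symm
          · intro v hv hadj
            rcases Finset.mem_erase.1 (Finset.mem_coe.1 hv) with ⟨hvaa, hvS⟩
            rcases hdw v (Finset.mem_coe.2 hvS) hadj with h | h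
            · exact absurd h hvaa
            · exact hdz v (Finset.mem_coe.2 hvS) h
        have h2 := IH b hbea hb'
        have ha' : DominatedIn G (↑(S.erase b)) a := by
          refine ⟨z, Finset.mem_coe.2 (Finset.mem_erase.2 ⟨hzb, hzS⟩), hza, haz, ?_⟩
          intro v hv hadj
          exact hdz v (Finset.mem_coe.2 (Finset.mem_of_mem_erase (Finset.mem_coe.1 hv))) hadj
        refine Dism.cons _ a haeb ha' ?_
        rw [Finset.erase_right_comm]
        exact h2
    · -- w ≠ a
      have hb' : DominatedIn G (↑(S.erase a)) b := by
        refine ⟨w, Finset.mem_coe.2 (Finset.mem_erase.2 ⟨hwa, hwS⟩), hwb, hbw, ?_⟩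
        intro v hv hadj
        exact hdw v (Finset.mem_coe.2 (Finset.mem_of_mem_erase (Finset.mem_coe.1 hv))) hadj
      have h2 := IH b hbea hb'
      by_cases hzb : z = b
      · rw [hzb] at haz hdz
        -- a was dominated by b; now use w, the dominator of b
        have ha' : DominatedIn G (↑(S.erase b)) a := by
          refine ⟨w, Finset.mem_coe.2 (Finset.mem_erase.2 ⟨hwb, hwS⟩), hwa, ?_, ?_⟩
          · rcases hdw a (Finset.mem_coe.2 haS) haz.symm with h | h
            · exact absurd h (Ne.symm hwa)
            · exact h.symm
          · intro v hv hadj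
            rcases Finset.mem_erase.1 (Finset.mem_coe.1 hv) with ⟨hvb, hvS⟩
            rcases hdz v (Finset.mem_coe.2 hvS) hadj with h | h
            · exact absurd h hvb
            · exact hdw v (Finset.mem_coe.2 hvS) h
        refine Dism.cons _ a haeb ha' ?_
        rw [Finset.erase_right_comm]
        exact h2
      · have ha' : DominatedIn G (↑(S.erase b)) a := by
          refine ⟨z, Finset.mem_coe.2 (Finset.mem_erase.2 ⟨hzb, hzS⟩), hza, haz, ?_⟩
          intro v hv hadj
          exact hdz v (Finset.mem_coe.2 (Finset.mem_of_mem_erase (Finset.mem_coe.1 hv))) hadj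
        refine Dism.cons _ a haeb ha' ?_
        rw [Finset.erase_right_comm]
        exact h2

/-- A dismantlable graph with no strict domination is complete. -/
theorem clique_of_noStrict {G : SimpleGraph V} :
    ∀ S : Finset V, Dism G S →
      (∀ b ∈ S, ∀ w ∈ S, NS G S b ⊆ NS G S w → NS G S b = NS G S w) →
      G.IsClique (↑S) := by
  intro S
  induction S using Finset.strongInductionOn with
  | _ S IH =>
    intro hD hns
    cases hD with
    | single a =>
      rw [Finset.coe_singleton]
      exact Set.pairwise_singleton a G.Adj
    | cons S a haS hdom hsub =>
      obtain ⟨z, hzS', hza, haz, hdz⟩ := hdom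
      have hzS : z ∈ S := hzS'
      have hNSsub : NS G S a ⊆ NS G S z := NS_subset_of_dom hzS' hza haz hdz
      have hNSeq : NS G S a = NS G S z := hns a haS z hzS hNSsub
      have hdomz : DominatedIn G (↑S) z := by
        refine ⟨a, Finset.mem_coe.2 haS, Ne.symm hza, haz.symm, ?_⟩
        intro v hv hadj
        have hmem : v ∈ NS G S z := mem_NS.2 ⟨Finset.mem_coe.1 hv, Or.inr hadj⟩
        rw [← hNSeq] at hmem
        exact (mem_NS.1 hmem).2
      have hDfull : Dism G S := Dism.cons S a haS ⟨z, hzS', hza, haz, hdz⟩ hsub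
      have hDz : Dism G (S.erase z) := dismErase hDfull z hzS hdomz
      have hns' : ∀ u ∈ S.erase z, ∀ x ∈ S.erase z,
          NS G (S.erase z) u ⊆ NS G (S.erase z) x → NS G (S.erase z) u = NS G (S.erase z) x := by
        intro u hu x hx hsub'
        rcases Finset.mem_erase.1 hu with ⟨huz, huS⟩
        rcases Finset.mem_erase.1 hx with ⟨hxz, hxS⟩
        rw [NS_erase, NS_erase] at hsub' ⊢
        by_cases hzu : z ∈ NS G S u
        · have hu_in : u ∈ NS G S z := by
            rcases (mem_NS.1 hzu).2 with h | h
            · exact absurd h.symm huz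
            · exact mem_NS.2 ⟨huS, Or.inr h.symm⟩
          have hau : a ∈ NS G S u := by
            rw [← hNSeq] at hu_in
            rcases (mem_NS.1 hu_in).2 with h | h
            · exact mem_NS.2 ⟨haS, Or.inl h.symm⟩
            · exact mem_NS.2 ⟨haS, Or.inr h.symm⟩
          have haz' : a ∈ (NS G S x).erase z :=
            hsub' (Finset.mem_erase.2 ⟨Ne.symm hza, hau⟩)
          have hzx : z ∈ NS G S x := by
            have hax : a ∈ NS G S x := Finset.mem_of_mem_erase haz'
            rcases (mem_NS.1 hax).2 with h | h
            · rw [← h, hNSeq]; exact self_mem_NS hzS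
            · have hxa : x ∈ NS G S a := mem_NS.2 ⟨hxS, Or.inr h.symm⟩
              rw [hNSeq] at hxa
              rcases (mem_NS.1 hxa).2 with h2 | h2
              · exact absurd h2 hxz
              · exact mem_NS.2 ⟨hzS, Or.inr h2.symm⟩
          have hNSsub2 : NS G S u ⊆ NS G S x := by
            intro v hv
            by_cases hvz : v = z
            · subst hvz; exact hzx
            · exact Finset.mem_of_mem_erase (hsub' (Finset.mem_erase.2 ⟨hvz, hv⟩))
          rw [hns u huS x hxS hNSsub2]
        · have h1 : NS G S u ⊆ NS G S x := by
            intro v hv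
            have hvz : v ≠ z := fun h => hzu (h ▸ hv)
            exact Finset.mem_of_mem_erase (hsub' (Finset.mem_erase.2 ⟨hvz, hv⟩))
          rw [hns u huS x hxS h1]
      have hclE : G.IsClique (↑(S.erase z)) := IH (S.erase z) (Finset.erase_ssubset hzS) hDz hns'
      have hzadj : ∀ p ∈ S, p ≠ z → G.Adj z p := by
        intro p hpS hpz
        have hpa : p ∈ NS G S a := by
          by_cases hpa' : p = a
          · exact mem_NS.2 ⟨hpS, Or.inl hpa'⟩
          · have hadj : G.Adj a p := by
              refine hclE ?_ ?_ (fun h => hpa' h.symm)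
              · exact Finset.mem_coe.2 (Finset.mem_erase.2 ⟨Ne.symm hza, haS⟩)
              · exact Finset.mem_coe.2 (Finset.mem_erase.2 ⟨hpz, hpS⟩)
            exact mem_NS.2 ⟨hpS, Or.inr hadj⟩
        rw [hNSeq] at hpa
        rcases (mem_NS.1 hpa).2 with h | h
        · exact absurd h hpz
        · exact h
      rw [SimpleGraph.isClique_iff]
      intro p hp q hq hpq
      have hpS : p ∈ S := Finset.mem_coe.1 hp
      have hqS : q ∈ S := Finset.mem_coe.1 hq
      by_cases hpz : p = z
      · subst hpz
        exact hzadj q hqS (Ne.symm hpq)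
      · by_cases hqz : q = z
        · subst hqz
          exact (hzadj p hpS hpz).symm
        · exact hclE (Finset.mem_coe.2 (Finset.mem_erase.2 ⟨hpz, hpS⟩))
            (Finset.mem_coe.2 (Finset.mem_erase.2 ⟨hqz, hqS⟩)) hpq

section Equivariant

variable (G : SimpleGraph V) (H : Subgroup (Equiv.Perm V))

/-- `S` is `H`-invariant. -/
def HInvF (S : Finset V) : Prop := ∀ σ ∈ H, ∀ v ∈ S, σ v ∈ S

/-- Equivariant simplicial dismantlability structure. -/
inductive EqSD : Finset V → Prop
  | base (S : Finset V) (hne : S.Nonempty) (hinv : HInvF H S) (hcl : G.IsClique (↑S)) :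
      EqSD S
  | step (S A Z : Finset V) (b : V) (hAS : A ⊆ S) (hbA : b ∈ A)
      (hA : ∀ v, v ∈ A ↔ ∃ σ ∈ H, σ b = v)
      (hZne : Z.Nonempty) (hZS : Z ⊆ S \ A)
      (hZinv : ∀ σ ∈ H, ∀ v ∈ Z, σ v ∈ Z)
      (hZdom : ∀ C : Finset V, C ⊆ S → (∀ σ ∈ H, ∀ v ∈ C, σ v ∈ C) →
          G.IsClique (↑C) → A ⊆ C → G.IsClique (↑(C ∪ Z) : Set V))
      (h2 : EqSD (S \ A)) : EqSD S

variable {G H}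

theorem mem_NS_apply {S : Finset V} (hH : ∀ σ ∈ H, ∀ u v : V, G.Adj u v ↔ G.Adj (σ u) (σ v))
    (hinv : HInvF H S) {σ : Equiv.Perm V} (hσ : σ ∈ H) {u v : V} :
    v ∈ NS G S u ↔ σ v ∈ NS G S (σ u) := by
  constructor
  · intro hv
    rcases mem_NS.1 hv with ⟨hvS, h2⟩
    refine mem_NS.2 ⟨hinv σ hσ v hvS, ?_⟩
    rcases h2 with rfl | hadj
    · exact Or.inl rfl
    · exact Or.inr ((hH σ hσ u v).1 hadj)
  · intro hv
    rcases mem_NS.1 hv with ⟨hvS, h2⟩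
    have hvS' : v ∈ S := by
      have := hinv σ⁻¹ (inv_mem hσ) _ hvS
      simpa using this
    refine mem_NS.2 ⟨hvS', ?_⟩
    rcases h2 with heq | hadj
    · exact Or.inl (σ.injective heq)
    · exact Or.inr ((hH σ hσ u v).2 hadj)

theorem NS_image {S : Finset V} (hH : ∀ σ ∈ H, ∀ u v : V, G.Adj u v ↔ G.Adj (σ u) (σ v))
    (hinv : HInvF H S) {σ : Equiv.Perm V} (hσ : σ ∈ H) (u : V) :
    (NS G S u).image σ = NS G S (σ u) := by
  ext w
  constructor
  · intro hw
    rcases Finset.mem_image.1 hw with ⟨v, hv, rfl⟩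
    exact (mem_NS_apply hH hinv hσ).1 hv
  · intro hw
    refine Finset.mem_image.2 ⟨σ⁻¹ w, ?_, by simp⟩
    have := (mem_NS_apply hH hinv (inv_mem hσ) (u := σ u) (v := w)).1 hw
    simpa using this

theorem card_NS_apply {S : Finset V} (hH : ∀ σ ∈ H, ∀ u v : V, G.Adj u v ↔ G.Adj (σ u) (σ v))
    (hinv : HInvF H S) {σ : Equiv.Perm V} (hσ : σ ∈ H) (u : V) :
    (NS G S (σ u)).card = (NS G S u).card := by
  rw [← NS_image hH hinv hσ u, Finset.card_image_of_injective _ σ.injective]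

/-- The combinatorial heart: a dismantlable invariant induced subgraph carries an
equivariant simplicial dismantling. -/
theorem toEqSD (hH : ∀ σ ∈ H, ∀ u v : V, G.Adj u v ↔ G.Adj (σ u) (σ v)) :
    ∀ S : Finset V, Dism G S → HInvF H S → EqSD G H S := fun S =>
  Finset.strongInductionOn S fun S IH hD hinv => by
    by_cases hcl : G.IsClique (↑S : Set V)
    · exact EqSD.base S hD.nonempty hinv hcl
    · have hstrict : ¬ ∀ b ∈ S, ∀ w ∈ S, NS G S b ⊆ NS G S w → NS G S b = NS G S w :=
        fun h => hcl (clique_of_noStrict S hD h)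
      push_neg at hstrict
      obtain ⟨b, hbS, w, hwS, hsubbw, hnebw⟩ := hstrict
      have hcard : (NS G S b).card < (NS G S w).card :=
        Finset.card_lt_card (Finset.ssubset_iff_subset_ne.2 ⟨hsubbw, hnebw⟩)
      set A : Finset V := Finset.univ.filter (fun v => ∃ σ ∈ H, σ b = v) with hAdef
      have hmemA : ∀ v, v ∈ A ↔ ∃ σ ∈ H, σ b = v := by
        intro v
        simp [hAdef]
      have hbA : b ∈ A := (hmemA b).2 ⟨1, H.one_mem, by simp⟩
      have hAS : A ⊆ S := by
        intro v hv
        obtain ⟨σ, hσ, rfl⟩ := (hmemA v).1 hv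
        exact hinv σ hσ b hbS
      have hAinv : ∀ σ ∈ H, ∀ v ∈ A, σ v ∈ A := by
        intro σ hσ v hv
        obtain ⟨τ, hτ, rfl⟩ := (hmemA v).1 hv
        exact (hmemA _).2 ⟨σ * τ, H.mul_mem hσ hτ, by simp [Equiv.Perm.mul_apply]⟩
      have hnotA : ∀ σ ∈ H, σ w ∉ A := by
        intro σ hσ hmem
        obtain ⟨τ, hτ, heq⟩ := (hmemA _).1 hmem
        have h1 : (NS G S (σ w)).card = (NS G S w).card := card_NS_apply hH hinv hσ w
        have h2 : (NS G S (τ b)).card = (NS G S b).card := card_NS_apply hH hinv hτ b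
        rw [heq] at h2
        omega
      have hwA : w ∉ A := by
        have := hnotA 1 H.one_mem
        simpa using this
      have hbw : b ≠ w := fun h => hwA (h ▸ hbA)
      have hadjbw : G.Adj b w := by
        have hmem : b ∈ NS G S w := hsubbw (self_mem_NS hbS)
        rcases (mem_NS.1 hmem).2 with h | h
        · exact absurd h hbw
        · exact h.symm
      have hrem : ∀ n (A' : Finset V), A' ⊆ A → A'.card ≤ n → Dism G (S \ A') := by
        intro n
        induction n with
        | zero =>
          intro A' hA' hcard0
          have h0 : A' = ∅ := Finset.card_eq_zero.1 (le_antisymm hcard0 (Nat.zero_le _))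
          rw [h0, Finset.sdiff_empty]
          exact hD
        | succ n IHn =>
          intro A' hA' hcardn
          rcases A'.eq_empty_or_nonempty with rfl | ⟨c, hc⟩
          · rw [Finset.sdiff_empty]; exact hD
          · obtain ⟨σ, hσ, rfl⟩ := (hmemA c).1 (hA' hc)
            have hset : S \ A' = (S \ A'.erase (σ b)).erase (σ b) := by
              ext v
              simp only [Finset.mem_sdiff, Finset.mem_erase]
              constructor
              · rintro ⟨hvS, hvA⟩
                exact ⟨fun h => hvA (h ▸ hc), hvS, fun h => hvA h.2⟩
              · rintro ⟨hvc, hvS, hvA⟩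
                exact ⟨hvS, fun h => hvA ⟨hvc, h⟩⟩
            have hD'' : Dism G (S \ A'.erase (σ b)) := by
              refine IHn (A'.erase (σ b)) ((Finset.erase_subset _ _).trans hA') ?_
              have := Finset.card_erase_of_mem hc
              omega
            have hdomc : DominatedIn G (↑(S \ A'.erase (σ b))) (σ b) := by
              refine ⟨σ w, ?_, ?_, ?_, ?_⟩
              · refine Finset.mem_coe.2 (Finset.mem_sdiff.2 ⟨hinv σ hσ w hwS, ?_⟩)
                exact fun h => (hnotA σ hσ) (hA' (Finset.mem_of_mem_erase h))
              · exact fun h => hbw (σ.injective h.symm)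
              · exact (hH σ hσ b w).1 hadjbw
              · intro v hv hadj
                have hvS : v ∈ S := (Finset.mem_sdiff.1 (Finset.mem_coe.1 hv)).1
                have hv' : σ⁻¹ v ∈ S := by
                  have := hinv σ⁻¹ (inv_mem hσ) v hvS
                  simpa using this
                have hadj' : G.Adj b (σ⁻¹ v) := by
                  apply (hH σ hσ b (σ⁻¹ v)).2
                  simpa using hadj
                have hmem : σ⁻¹ v ∈ NS G S b := mem_NS.2 ⟨hv', Or.inr hadj'⟩
                rcases (mem_NS.1 (hsubbw hmem)).2 with h | h
                · left; rw [← h]; simp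
                · right
                  have := (hH σ hσ w (σ⁻¹ v)).1 h
                  simpa using this
            have hin : σ b ∈ S \ A'.erase (σ b) :=
              Finset.mem_sdiff.2 ⟨hinv σ hσ b hbS, Finset.notMem_erase _ _⟩
            have hfinal := dismErase hD'' (σ b) hin hdomc
            rw [hset]
            exact hfinal
      have hDrem : Dism G (S \ A) := hrem A.card A le_rfl le_rfl
      have hinv' : HInvF H (S \ A) := by
        intro σ hσ v hv
        rcases Finset.mem_sdiff.1 hv with ⟨hvS, hvA⟩
        refine Finset.mem_sdiff.2 ⟨hinv σ hσ v hvS, fun h => hvA ?_⟩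
        have := hAinv σ⁻¹ (inv_mem hσ) _ h
        simpa using this
      have hssub : S \ A ⊂ S := Finset.sdiff_ssubset hAS ⟨b, hbA⟩
      have hE2 := IH (S \ A) hssub hDrem hinv'
      set Z : Finset V := S.filter (fun u => u ∉ A ∧ ∃ a' ∈ A, NS G S a' ⊆ NS G S u) with hZdef
      have hmemZ : ∀ u, u ∈ Z ↔ u ∈ S ∧ u ∉ A ∧ ∃ a' ∈ A, NS G S a' ⊆ NS G S u := by
        intro u
        simp [hZdef]
      have hZne : Z.Nonempty := ⟨w, (hmemZ w).2 ⟨hwS, hwA, b, hbA, hsubbw⟩⟩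
      have hZS : Z ⊆ S \ A := by
        intro u hu
        rcases (hmemZ u).1 hu with ⟨huS, huA, _⟩
        exact Finset.mem_sdiff.2 ⟨huS, huA⟩
      have hZinv : ∀ σ ∈ H, ∀ v ∈ Z, σ v ∈ Z := by
        intro σ hσ u hu
        rcases (hmemZ u).1 hu with ⟨huS, huA, a', ha', hsub'⟩
        refine (hmemZ _).2 ⟨hinv σ hσ u huS, ?_, σ a', hAinv σ hσ a' ha', ?_⟩
        · intro h
          apply huA
          have := hAinv σ⁻¹ (inv_mem hσ) _ h
          simpa using this
        · rw [← NS_image hH hinv hσ a', ← NS_image hH hinv hσ u]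
          exact Finset.image_subset_image hsub'
      have hZdom : ∀ C : Finset V, C ⊆ S → (∀ σ ∈ H, ∀ v ∈ C, σ v ∈ C) →
          G.IsClique (↑C) → A ⊆ C → G.IsClique (↑(C ∪ Z) : Set V) := by
        intro C hCS _ hCcl hAC
        have hkey : ∀ p ∈ C, ∀ q ∈ Z, p ≠ q → G.Adj p q := by
          intro p hpC q hq hpq
          rcases (hmemZ q).1 hq with ⟨hqS, hqA, a', ha'A, hsub'⟩
          by_cases hpa : p = a'
          · have hmem := hsub' (self_mem_NS (hAS ha'A))
            rcases (mem_NS.1 hmem).2 with h | h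
            · exact absurd (hpa.trans h) hpq
            · rw [hpa]
              exact h.symm
          · have hadj : G.Adj a' p :=
              hCcl (Finset.mem_coe.2 (hAC ha'A)) (Finset.mem_coe.2 hpC) (fun h => hpa h.symm)
            have hmem : p ∈ NS G S a' := mem_NS.2 ⟨hCS hpC, Or.inr hadj⟩
            rcases (mem_NS.1 (hsub' hmem)).2 with h | h
            · exact absurd h hpq
            · exact h.symm
        have hZZ : ∀ p ∈ Z, ∀ q ∈ Z, p ≠ q → G.Adj p q := by
          intro p hp q hq hpq
          rcases (hmemZ p).1 hp with ⟨hpS, hpA, a', ha'A, hsubp⟩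
          rcases (hmemZ q).1 hq with ⟨hqS, hqA, a'', ha''A, hsubq⟩
          have h1 : a'' ∈ NS G S a' := by
            by_cases h : a'' = a'
            · exact mem_NS.2 ⟨hAS ha''A, Or.inl h⟩
            · have hadj : G.Adj a' a'' :=
                hCcl (Finset.mem_coe.2 (hAC ha'A)) (Finset.mem_coe.2 (hAC ha''A))
                  (fun hh => h hh.symm)
              exact mem_NS.2 ⟨hAS ha''A, Or.inr hadj⟩
          have h3 : p ∈ NS G S a'' := by
            rcases (mem_NS.1 (hsubp h1)).2 with h | h
            · exact absurd (h ▸ ha''A) hpA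
            · exact mem_NS.2 ⟨hpS, Or.inr h.symm⟩
          rcases (mem_NS.1 (hsubq h3)).2 with h | h
          · exact absurd h hpq
          · exact h.symm
        rw [SimpleGraph.isClique_iff]
        intro p hp q hq hpq
        rw [Finset.coe_union, Set.mem_union] at hp hq
        rcases hp with hp | hp <;> rcases hq with hq | hq
        · exact hCcl hp hq hpq
        · exact hkey p (Finset.mem_coe.1 hp) q (Finset.mem_coe.1 hq) hpq
        · exact (hkey q (Finset.mem_coe.1 hq) p (Finset.mem_coe.1 hp) (Ne.symm hpq)).symm
        · exact hZZ p (Finset.mem_coe.1 hp) q (Finset.mem_coe.1 hq) hpq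
      exact EqSD.step S A Z b hAS hbA hmemA hZne hZS hZinv hZdom hE2

end Equivariant

section Topology

variable (G : SimpleGraph V) (H : Subgroup (Equiv.Perm V))

/-- The fixed point set of `H` acting on the realization of the flag complex, restricted
to functions supported on `S`. -/
def Xset (S : Finset V) : Set (V → ℝ) :=
  {x | (((∀ v, 0 ≤ x v) ∧ (∑ v, x v) = 1 ∧ G.IsClique {v | x v ≠ 0}) ∧
      ∀ σ ∈ H, ∀ v : V, x (σ v) = x v) ∧ ∀ v, v ∉ S → x v = 0}

variable {G H}

/-- The retraction pushing the mass on `A` uniformly onto `Z`. -/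
noncomputable def fPush (A Z : Finset V) (x : V → ℝ) : V → ℝ := fun v =>
  if v ∈ A then 0 else if v ∈ Z then x v + (∑ a ∈ A, x a) / Z.card else x v

theorem fPush_self {A Z : Finset V} {x : V → ℝ} (h0 : ∀ v ∈ A, x v = 0) :
    fPush A Z x = x := by
  have hm0 : ∑ a ∈ A, x a = 0 := Finset.sum_eq_zero h0
  funext v
  unfold fPush
  by_cases hvA : v ∈ A
  · rw [if_pos hvA, h0 v hvA]
  · rw [if_neg hvA]
    by_cases hvZ : v ∈ Z
    · rw [if_pos hvZ, hm0, zero_div, add_zero]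
    · rw [if_neg hvZ]

theorem fPush_spec {S A Z : Finset V} {b : V}
    (hA : ∀ v, v ∈ A ↔ ∃ σ ∈ H, σ b = v) (hZne : Z.Nonempty) (hZS : Z ⊆ S \ A)
    (hZinv : ∀ σ ∈ H, ∀ v ∈ Z, σ v ∈ Z)
    (hZdom : ∀ C : Finset V, C ⊆ S → (∀ σ ∈ H, ∀ v ∈ C, σ v ∈ C) →
        G.IsClique (↑C) → A ⊆ C → G.IsClique (↑(C ∪ Z) : Set V))
    {x : V → ℝ} (hx : x ∈ Xset G H S) :
    fPush A Z x ∈ Xset G H (S \ A) ∧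
      ∀ s t : ℝ, 0 ≤ s → 0 ≤ t → s + t = 1 →
        (fun v => s * x v + t * fPush A Z x v) ∈ Xset G H S := by
  obtain ⟨⟨⟨hx1, hx2, hx3⟩, hx4⟩, hx5⟩ := hx
  have hZA : ∀ v ∈ Z, v ∉ A := fun v hv => (Finset.mem_sdiff.1 (hZS hv)).2
  have hZS' : ∀ v ∈ Z, v ∈ S := fun v hv => (Finset.mem_sdiff.1 (hZS hv)).1
  have hAZ : ∀ v ∈ A, v ∉ Z := fun v hv hvZ => hZA v hvZ hv
  have hZcard : (0:ℝ) < Z.card := by exact_mod_cast Finset.card_pos.2 hZne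
  have hm0 : 0 ≤ ∑ a ∈ A, x a := Finset.sum_nonneg fun v _ => hx1 v
  have horb : ∀ u ∈ A, ∀ v ∈ A, x u = x v := by
    intro u hu v hv
    obtain ⟨σ, hσ, rfl⟩ := (hA u).1 hu
    obtain ⟨τ, hτ, rfl⟩ := (hA v).1 hv
    have h1 : x ((σ * τ⁻¹) (τ b)) = x (τ b) :=
      hx4 (σ * τ⁻¹) (H.mul_mem hσ (H.inv_mem hτ)) (τ b)
    have h2 : (σ * τ⁻¹) (τ b) = σ b := by simp [Equiv.Perm.mul_apply]
    rw [h2] at h1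
    exact h1
  have hAiff : ∀ σ ∈ H, ∀ v, v ∈ A ↔ σ v ∈ A := by
    intro σ hσ v
    constructor
    · intro hv
      obtain ⟨τ, hτ, rfl⟩ := (hA v).1 hv
      exact (hA _).2 ⟨σ * τ, H.mul_mem hσ hτ, by simp [Equiv.Perm.mul_apply]⟩
    · intro hv
      obtain ⟨τ, hτ, hτv⟩ := (hA (σ v)).1 hv
      have hveq : v = (σ⁻¹ * τ) b := by
        rw [Equiv.Perm.mul_apply, hτv]
        simp
      rw [hveq]
      exact (hA _).2 ⟨σ⁻¹ * τ, H.mul_mem (H.inv_mem hσ) hτ, rfl⟩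
  have hZiff : ∀ σ ∈ H, ∀ v, v ∈ Z ↔ σ v ∈ Z := by
    intro σ hσ v
    constructor
    · exact fun hv => hZinv σ hσ v hv
    · intro hv
      have := hZinv σ⁻¹ (H.inv_mem hσ) _ hv
      simpa using this
  have hf1 : ∀ v, 0 ≤ fPush A Z x v := by
    intro v
    unfold fPush
    by_cases hvA : v ∈ A
    · rw [if_pos hvA]
    · rw [if_neg hvA]
      by_cases hvZ : v ∈ Z
      · rw [if_pos hvZ]
        exact add_nonneg (hx1 v) (div_nonneg hm0 (le_of_lt hZcard))
      · rw [if_neg hvZ]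
        exact hx1 v
  have hf2 : ∑ v, fPush A Z x v = 1 := by
    have hsplit : ∀ v : V, fPush A Z x v
        = (x v - if v ∈ A then x v else 0) + (if v ∈ Z then (∑ a ∈ A, x a) / Z.card else 0) := by
      intro v
      unfold fPush
      by_cases hvA : v ∈ A
      · rw [if_pos hvA, if_pos hvA, if_neg (hAZ v hvA)]
        ring
      · rw [if_neg hvA, if_neg hvA]
        by_cases hvZ : v ∈ Z
        · rw [if_pos hvZ, if_pos hvZ]
          ring
        · rw [if_neg hvZ, if_neg hvZ]
          ring
    have hfield : (Z.card : ℝ) * ((∑ a ∈ A, x a) / (Z.card : ℝ)) = ∑ a ∈ A, x a := by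
      field_simp
    calc ∑ v, fPush A Z x v
        = ∑ v, ((x v - if v ∈ A then x v else 0)
            + (if v ∈ Z then (∑ a ∈ A, x a) / Z.card else 0)) :=
          Finset.sum_congr rfl fun v _ => hsplit v
      _ = 1 := by
          rw [Finset.sum_add_distrib, Finset.sum_sub_distrib, Finset.sum_ite_mem,
            Finset.sum_ite_mem, Finset.univ_inter, Finset.univ_inter, Finset.sum_const, hx2,
            nsmul_eq_mul, hfield]
          ring
  have hf4 : ∀ σ ∈ H, ∀ v, fPush A Z x (σ v) = fPush A Z x v := by
    intro σ hσ v
    unfold fPush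
    by_cases hvA : v ∈ A
    · rw [if_pos ((hAiff σ hσ v).1 hvA), if_pos hvA]
    · rw [if_neg (fun h => hvA ((hAiff σ hσ v).2 h)), if_neg hvA]
      by_cases hvZ : v ∈ Z
      · rw [if_pos ((hZiff σ hσ v).1 hvZ), if_pos hvZ, hx4 σ hσ v]
      · rw [if_neg (fun h => hvZ ((hZiff σ hσ v).2 h)), if_neg hvZ]
        exact hx4 σ hσ v
  have hf5 : ∀ v, v ∉ S \ A → fPush A Z x v = 0 := by
    intro v hv
    unfold fPush
    by_cases hvA : v ∈ A
    · rw [if_pos hvA]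
    · rw [if_neg hvA]
      have hvS : v ∉ S := fun h => hv (Finset.mem_sdiff.2 ⟨h, hvA⟩)
      have hvZ : v ∉ Z := fun h => hvS (hZS' v h)
      rw [if_neg hvZ]
      exact hx5 v hvS
  by_cases hmz : (∑ a ∈ A, x a) = 0
  · have h0 : ∀ v ∈ A, x v = 0 :=
      fun v hv => (Finset.sum_eq_zero_iff_of_nonneg (fun u _ => hx1 u)).1 hmz v hv
    have hfe : fPush A Z x = x := fPush_self h0
    have hf5x : ∀ v, v ∉ S \ A → x v = 0 := by
      intro v hv
      rw [← hfe]
      exact hf5 v hv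
    constructor
    · rw [hfe]
      exact ⟨⟨⟨hx1, hx2, hx3⟩, hx4⟩, hf5x⟩
    · intro s t hs ht hst
      simp only [hfe]
      have hcombo : (fun v => s * x v + t * x v) = x := by
        funext v
        rw [← add_mul, hst, one_mul]
      rw [hcombo]
      exact ⟨⟨⟨hx1, hx2, hx3⟩, hx4⟩, hx5⟩
  · have hAsupp : ∀ v ∈ A, x v ≠ 0 := by
      intro v hv h0
      apply hmz
      apply Finset.sum_eq_zero
      intro u hu
      rw [horb u hu v hv, h0]
    set C := Finset.univ.filter (fun v => x v ≠ 0) with hC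
    have hCco : (↑C : Set V) = {v | x v ≠ 0} := by
      ext v
      simp [hC]
    have hCS : C ⊆ S := by
      intro v hv
      rw [hC, Finset.mem_filter] at hv
      by_contra h
      exact hv.2 (hx5 v h)
    have hCinv : ∀ σ ∈ H, ∀ v ∈ C, σ v ∈ C := by
      intro σ hσ v hv
      rw [hC, Finset.mem_filter] at hv ⊢
      refine ⟨Finset.mem_univ _, ?_⟩
      rw [hx4 σ hσ v]
      exact hv.2
    have hCcl : G.IsClique (↑C : Set V) := by
      rw [hCco]
      exact hx3
    have hAC : A ⊆ C := by
      intro v hv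
      rw [hC, Finset.mem_filter]
      exact ⟨Finset.mem_univ _, hAsupp v hv⟩
    have hbig : G.IsClique (↑(C ∪ Z) : Set V) := hZdom C hCS hCinv hCcl hAC
    have hsupf : {v | fPush A Z x v ≠ 0} ⊆ (↑(C ∪ Z) : Set V) := by
      intro v hv
      simp only [Set.mem_setOf_eq] at hv
      rw [Finset.coe_union, Set.mem_union]
      by_cases hvZ : v ∈ Z
      · right
        exact Finset.mem_coe.2 hvZ
      · left
        rw [Finset.mem_coe, hC, Finset.mem_filter]
        refine ⟨Finset.mem_univ _, ?_⟩
        intro h0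
        apply hv
        unfold fPush
        by_cases hvA : v ∈ A
        · rw [if_pos hvA]
        · rw [if_neg hvA, if_neg hvZ]
          exact h0
    constructor
    · exact ⟨⟨⟨hf1, hf2, hbig.subset hsupf⟩, hf4⟩, hf5⟩
    · intro s t hs ht hst
      refine ⟨⟨⟨?_, ?_, ?_⟩, ?_⟩, ?_⟩
      · intro v
        exact add_nonneg (mul_nonneg hs (hx1 v)) (mul_nonneg ht (hf1 v))
      · rw [Finset.sum_add_distrib, ← Finset.mul_sum, ← Finset.mul_sum, hx2, hf2, mul_one,
          mul_one]
        exact hst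
      · refine hbig.subset ?_
        intro v hv
        simp only [Set.mem_setOf_eq] at hv
        have hcases : x v ≠ 0 ∨ fPush A Z x v ≠ 0 := by
          by_contra h
          push_neg at h
          apply hv
          rw [h.1, h.2, mul_zero, mul_zero, add_zero]
        rcases hcases with h | h
        · rw [Finset.coe_union, Set.mem_union]
          left
          rw [Finset.mem_coe, hC, Finset.mem_filter]
          exact ⟨Finset.mem_univ _, h⟩
        · exact hsupf h
      · intro σ hσ v
        dsimp only
        rw [hx4 σ hσ v, hf4 σ hσ v]
      · intro v hv
        dsimp only
        rw [hx5 v hv, hf5 v (fun h => hv (Finset.mem_sdiff.1 h).1), mul_zero, mul_zero, add_zero]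

theorem eqSD_good {S : Finset V} (hE : EqSD G H S) :
    (Xset G H S).Nonempty ∧ ContractibleSpace (Xset G H S) := by
  induction hE with
  | base S hne hinvS hcl =>
    have hcard : (0:ℝ) < S.card := by exact_mod_cast Finset.card_pos.2 hne
    have hmem : (fun v => if v ∈ S then (S.card : ℝ)⁻¹ else 0) ∈ Xset G H S := by
      refine ⟨⟨⟨?_, ?_, ?_⟩, ?_⟩, ?_⟩
      · intro v
        dsimp only
        by_cases h : v ∈ S
        · rw [if_pos h]
          positivity
        · rw [if_neg h]
      · dsimp only
        rw [Finset.sum_ite_mem, Finset.univ_inter, Finset.sum_const, nsmul_eq_mul,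
          mul_inv_cancel₀ (ne_of_gt hcard)]
      · have hsupp : {v | (fun v => if v ∈ S then (S.card : ℝ)⁻¹ else 0) v ≠ 0}
            = (↑S : Set V) := by
          ext v
          simp only [Set.mem_setOf_eq, Finset.mem_coe]
          by_cases h : v ∈ S
          · simp [h, ne_of_gt (inv_pos.2 hcard)]
          · simp [h]
        rw [hsupp]
        exact hcl
      · intro σ hσ v
        dsimp only
        by_cases h : v ∈ S
        · rw [if_pos (hinvS σ hσ v h), if_pos h]
        · have hns : σ v ∉ S := by
            intro hc
            apply h
            have h2 := hinvS σ⁻¹ (inv_mem hσ) (σ v) hc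
            simpa using h2
          rw [if_neg hns, if_neg h]
      · intro v hv
        dsimp only
        rw [if_neg hv]
    have hconv : Convex ℝ (Xset G H S) := by
      intro x hx y hy s t hs ht hst
      obtain ⟨⟨⟨hx1, hx2, _⟩, hx4⟩, hx5⟩ := hx
      obtain ⟨⟨⟨hy1, hy2, _⟩, hy4⟩, hy5⟩ := hy
      have happ : ∀ v, (s • x + t • y) v = s * x v + t * y v := fun v => rfl
      refine ⟨⟨⟨?_, ?_, ?_⟩, ?_⟩, ?_⟩
      · intro v
        rw [happ]
        exact add_nonneg (mul_nonneg hs (hx1 v)) (mul_nonneg ht (hy1 v))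
      · calc ∑ v, (s • x + t • y) v = ∑ v, (s * x v + t * y v) :=
              Finset.sum_congr rfl fun v _ => happ v
          _ = 1 := by
              rw [Finset.sum_add_distrib, ← Finset.mul_sum, ← Finset.mul_sum, hx2, hy2,
                mul_one, mul_one]
              exact hst
      · refine hcl.subset ?_
        intro v hv
        simp only [Set.mem_setOf_eq] at hv
        by_contra h
        have hvS : v ∉ S := fun hc => h (Finset.mem_coe.2 hc)
        apply hv
        rw [happ, hx5 v hvS, hy5 v hvS, mul_zero, mul_zero, add_zero]
      · intro σ hσ v
        rw [happ, happ, hx4 σ hσ v, hy4 σ hσ v]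
      · intro v hv
        rw [happ, hx5 v hv, hy5 v hv, mul_zero, mul_zero, add_zero]
    exact ⟨⟨_, hmem⟩, hconv.contractibleSpace ⟨_, hmem⟩⟩
  | step S A Z b hAS hbA hA hZne hZS hZinv hZdom h2 IH =>
    obtain ⟨hne2, hc2⟩ := IH
    have hspec : ∀ x : V → ℝ, x ∈ Xset G H S →
        fPush A Z x ∈ Xset G H (S \ A) ∧
          ∀ s t : ℝ, 0 ≤ s → 0 ≤ t → s + t = 1 →
            (fun v => s * x v + t * fPush A Z x v) ∈ Xset G H S :=
      fun x hx => fPush_spec hA hZne hZS hZinv hZdom hx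
    have hmono : ∀ y ∈ Xset G H (S \ A), y ∈ Xset G H S := by
      intro y hy
      exact ⟨hy.1, fun v hv => hy.2 v (fun h => hv (Finset.mem_sdiff.1 h).1)⟩
    have hcontf : Continuous fun p : (Xset G H S) => fPush A Z (p : V → ℝ) := by
      apply continuous_pi
      intro v
      by_cases hvA : v ∈ A
      · simp only [fPush, if_pos hvA]
        exact continuous_const
      · by_cases hvZ : v ∈ Z
        · simp only [fPush, if_neg hvA, if_pos hvZ]
          refine Continuous.add ?_ ?_
          · exact (continuous_apply v).comp continuous_subtype_val
          · exact Continuous.div_const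
              (continuous_finset_sum A fun a _ => (continuous_apply a).comp
                continuous_subtype_val) _
        · simp only [fPush, if_neg hvA, if_neg hvZ]
          exact (continuous_apply v).comp continuous_subtype_val
    let fc : C((Xset G H S), (Xset G H (S \ A))) :=
      ⟨fun p => ⟨fPush A Z (p : V → ℝ), (hspec _ p.2).1⟩, hcontf.subtype_mk _⟩
    let ic : C((Xset G H (S \ A)), (Xset G H S)) :=
      ⟨fun p => ⟨(p : V → ℝ), hmono _ p.2⟩, continuous_subtype_val.subtype_mk _⟩
    have hfg : fc.comp ic = ContinuousMap.id _ := by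
      ext p v
      have h0 : ∀ u ∈ A, (p : V → ℝ) u = 0 :=
        fun u hu => p.2.2 u (fun h => (Finset.mem_sdiff.1 h).2 hu)
      show fPush A Z (p : V → ℝ) v = (p : V → ℝ) v
      rw [fPush_self h0]
    have hmemH : ∀ q : unitInterval × (Xset G H S),
        (fun v => (q.1 : ℝ) * ((q.2 : V → ℝ)) v
          + (1 - (q.1 : ℝ)) * fPush A Z ((q.2 : V → ℝ)) v) ∈ Xset G H S :=
      fun q => (hspec _ q.2.2).2 _ _ (unitInterval.nonneg q.1)
        (unitInterval.one_minus_nonneg q.1) (by ring)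
    let K : ContinuousMap.Homotopy (ic.comp fc) (ContinuousMap.id (Xset G H S)) := {
      toFun := fun q => ⟨_, hmemH q⟩
      continuous_toFun := by
        apply Continuous.subtype_mk
        apply continuous_pi
        intro v
        have h1 : Continuous fun q : unitInterval × (Xset G H S) => (q.1 : ℝ) :=
          continuous_subtype_val.comp continuous_fst
        have h2 : Continuous fun q : unitInterval × (Xset G H S) => ((q.2 : V → ℝ)) v :=
          (continuous_apply v).comp (continuous_subtype_val.comp continuous_snd)
        have h3 : Continuous fun q : unitInterval × (Xset G H S) =>
            fPush A Z ((q.2 : V → ℝ)) v :=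
          (continuous_apply v).comp (hcontf.comp continuous_snd)
        exact (h1.mul h2).add ((continuous_const.sub h1).mul h3)
      map_zero_left := by
        intro p
        apply Subtype.ext
        funext v
        show (0 : ℝ) * (p : V → ℝ) v + (1 - (0:ℝ)) * fPush A Z ((p : V → ℝ)) v
          = fPush A Z ((p : V → ℝ)) v
        ring
      map_one_left := by
        intro p
        apply Subtype.ext
        funext v
        show (1 : ℝ) * (p : V → ℝ) v + (1 - (1:ℝ)) * fPush A Z ((p : V → ℝ)) v
          = (p : V → ℝ) v
        ring }
    have hequiv : ContinuousMap.HomotopyEquiv (Xset G H S) (Xset G H (S \ A)) := {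
      toFun := fc
      invFun := ic
      left_inv := ⟨K⟩
      right_inv := by
        rw [hfg] }
    constructor
    · obtain ⟨y, hy⟩ := hne2
      exact ⟨y, hmono y hy⟩
    · haveI := hc2
      exact hequiv.contractibleSpace

end Topology

theorem dism_univ {V : Type*} [Fintype V] [Nonempty V] [DecidableEq V] (G : SimpleGraph V)
    (hd : Dismantlable G) : Dism G (Finset.univ : Finset V) := by
  obtain ⟨k, e, hdk⟩ := hd
  have hk : 0 < k := (e (Classical.arbitrary V)).pos
  have main : ∀ n, 1 ≤ n → n ≤ k →
      Dism G (Finset.univ.filter fun v => k - n ≤ ((e v : Fin k) : ℕ)) := by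
    intro n
    induction n with
    | zero => omega
    | succ n IHn =>
      intro _ hnk
      by_cases hn : n = 0
      · subst hn
        have hset : (Finset.univ.filter fun v => k - 1 ≤ ((e v : Fin k) : ℕ))
            = {e.symm ⟨k - 1, by omega⟩} := by
          ext v
          simp only [Finset.mem_filter, Finset.mem_univ, true_and, Finset.mem_singleton]
          rw [Equiv.eq_symm_apply]
          have hlt := (e v).isLt
          constructor
          · intro h
            exact Fin.ext (by omega : ((e v : Fin k) : ℕ) = k - 1)
          · intro h
            rw [h]
        rw [hset]
        exact Dism.single _
      · have hn1 : 1 ≤ n := by omega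
        have IH' := IHn hn1 (by omega)
        have hik : k - (n + 1) < k := by omega
        set i : Fin k := ⟨k - (n + 1), hik⟩ with hi
        have hival : (i : ℕ) = k - (n + 1) := rfl
        have hdom := hdk i (by omega)
        have hsetEq : {v : V | i ≤ e v}
            = (↑(Finset.univ.filter fun v => k - (n + 1) ≤ ((e v : Fin k) : ℕ)) : Set V) := by
          ext v
          simp only [Set.mem_setOf_eq, Finset.coe_filter, Finset.mem_univ, true_and, Fin.le_def,
            hival]
        rw [hsetEq] at hdom
        refine Dism.cons _ (e.symm i) ?_ hdom ?_
        · simp only [Finset.mem_filter, Finset.mem_univ, true_and, Equiv.apply_symm_apply]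
          omega
        · have herase : (Finset.univ.filter fun v => k - (n + 1) ≤ ((e v : Fin k) : ℕ)).erase
              (e.symm i) = Finset.univ.filter fun v => k - n ≤ ((e v : Fin k) : ℕ) := by
            ext v
            simp only [Finset.mem_erase, Finset.mem_filter, Finset.mem_univ, true_and]
            have hveq : v = e.symm i ↔ ((e v : Fin k) : ℕ) = k - (n + 1) := by
              rw [Equiv.eq_symm_apply, Fin.ext_iff, hival]
            rw [Ne, hveq]
            omega
          rw [herase]
          exact IH'
  have hfin := main k (by omega) le_rfl
  have huniv : (Finset.univ.filter fun v => k - k ≤ ((e v : Fin k) : ℕ)) = Finset.univ := by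
    apply Finset.filter_true_of_mem
    intro v _
    omega
  rwa [huniv] at hfin

end FixedPtAux

/-- Let `G` be a finite dismantlable graph and let `H` be a subgroup of its automorphism
group (realized as a subgroup of the permutations of the vertices, each of which is a
graph automorphism). Then the fixed-point set of `H` in the geometric realization of the
flag complex of `G` (realized inside `V → ℝ`) is nonempty and contractible. -/
theorem fixed_point_set_contractible {V : Type*} [Fintype V] [Nonempty V]
    (G : SimpleGraph V) (hd : Dismantlable G)
    (H : Subgroup (Equiv.Perm V))
    (hH : ∀ σ ∈ H, ∀ u v : V, G.Adj u v ↔ G.Adj (σ u) (σ v)) :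
    Nonempty {x : V → ℝ // ((∀ v, 0 ≤ x v) ∧ (∑ v, x v) = 1 ∧
        G.IsClique {v | x v ≠ 0}) ∧ ∀ σ ∈ H, ∀ v : V, x (σ v) = x v} ∧
    ContractibleSpace {x : V → ℝ // ((∀ v, 0 ≤ x v) ∧ (∑ v, x v) = 1 ∧
        G.IsClique {v | x v ≠ 0}) ∧ ∀ σ ∈ H, ∀ v : V, x (σ v) = x v} := by
  classical
  open FixedPtAux in
  have hD : Dism G (Finset.univ : Finset V) := dism_univ G hd
  have hinvU : FixedPtAux.HInvF H (Finset.univ : Finset V) :=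
    fun σ _ v _ => Finset.mem_univ _
  have hE := FixedPtAux.toEqSD hH Finset.univ hD hinvU
  obtain ⟨hne, hc⟩ := FixedPtAux.eqSD_good hE
  set P : (V → ℝ) → Prop := fun x => ((∀ v, 0 ≤ x v) ∧ (∑ v, x v) = 1 ∧
      G.IsClique {v | x v ≠ 0}) ∧ ∀ σ ∈ H, ∀ v : V, x (σ v) = x v with hP
  have hset : {x : V → ℝ | P x} = FixedPtAux.Xset G H Finset.univ := by
    ext x
    simp [FixedPtAux.Xset, hP]
  constructor
  · obtain ⟨x, hx⟩ := hne
    exact ⟨⟨x, hx.1⟩⟩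
  · haveI := hc
    exact (Homeomorph.setCongr hset).contractibleSpace
end

section
/- Let G be a group acting on a simplicial complex X with finitely many orbits of simplices, such that the stabiliser of the barycentre of every simplex that is not a vertex is finite, and such that every finite subgroup F ≤ G fixes the barycentre of some simplex. Then there is a finite collection of finite subgroups F_1, ..., F_k of G such that every finite subgroup of G either stabilises a vertex of X or is conjugate in G to a subgroup of some F_i. -/
private def stabSub {V : Type*} [DecidableEq V] {G : Type*} [Group G] [MulAction G V]
    (s : Finset V) : Subgroup G where
  carrier := {g : G | s.image (fun v => g • v) = s}
  one_mem' := by simp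
  mul_mem' := by
    intro a b ha hb
    simp only [Set.mem_setOf_eq] at *
    have : (fun v => (a * b) • v) = (fun v : V => a • v) ∘ (fun v => b • v) := by
      funext v; simp [mul_smul]
    rw [this, ← Finset.image_image, hb, ha]
  inv_mem' := by
    intro a ha
    simp only [Set.mem_setOf_eq] at *
    conv_lhs => rw [← ha]
    rw [Finset.image_image]
    simp only [Function.comp_def, inv_smul_smul, Finset.image_id']

/-- Let `G` act simplicially on a simplicial complex (a family `Xc` of nonempty finite
vertex sets closed under passing to nonempty subsets) with finitely many orbits of
simplices, such that the setwise stabiliser of every simplex with at least two vertices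
(the stabiliser of its barycentre) is finite, and such that every finite subgroup of `G`
setwise stabilises some simplex (fixes its barycentre). Then there is a finite collection
of finite subgroups `F_1, ..., F_k` such that every finite subgroup of `G` either fixes a
vertex of `X` or is conjugate in `G` to a subgroup of some `F_i`. -/
theorem finite_subgroups_conjugate_into_finitely_many {V : Type*} [DecidableEq V]
    {G : Type*} [Group G] [MulAction G V] (Xc : Set (Finset V))
    (hne : ∀ s ∈ Xc, s.Nonempty)
    (hdc : ∀ s ∈ Xc, ∀ t : Finset V, t ⊆ s → t.Nonempty → t ∈ Xc)
    (hinv : ∀ g : G, ∀ s ∈ Xc, s.image (fun v => g • v) ∈ Xc)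
    (horb : ∃ T : Set (Finset V), T.Finite ∧
      ∀ s ∈ Xc, ∃ s₀ ∈ T, ∃ g : G, s₀.image (fun v => g • v) = s)
    (hstab : ∀ s ∈ Xc, 2 ≤ s.card → {g : G | s.image (fun v => g • v) = s}.Finite)
    (hfix : ∀ F : Subgroup G, (F : Set G).Finite →
      ∃ s ∈ Xc, ∀ g ∈ F, s.image (fun v => g • v) = s) :
    ∃ (k : ℕ) (Fi : Fin k → Subgroup G), (∀ i, ((Fi i : Subgroup G) : Set G).Finite) ∧
      ∀ F : Subgroup G, (F : Set G).Finite →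
        (∃ v : V, (∃ s ∈ Xc, v ∈ s) ∧ ∀ g ∈ F, g • v = v) ∨
        ∃ (i : Fin k) (g : G), ∀ h ∈ F, g * h * g⁻¹ ∈ Fi i := by
  obtain ⟨T, hTfin, hTrep⟩ := horb
  set T' : Set (Finset V) := {s ∈ T | s ∈ Xc ∧ 2 ≤ s.card} with hT'def
  have hT' : T'.Finite := hTfin.subset (fun s hs => hs.1)
  classical
  set l := hT'.toFinset with hl
  refine ⟨l.card, fun i => stabSub ((l.equivFin.symm i : l) : Finset V), ?_, ?_⟩
  · intro i
    have hm : ((l.equivFin.symm i : l) : Finset V) ∈ T' :=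
      hT'.mem_toFinset.mp (l.equivFin.symm i).2
    exact hstab _ hm.2.1 hm.2.2
  · intro F hF
    obtain ⟨s, hsX, hsF⟩ := hfix F hF
    by_cases hcard : s.card = 1
    · left
      obtain ⟨v, hv⟩ := Finset.card_eq_one.mp hcard
      refine ⟨v, ⟨s, hsX, by simp [hv]⟩, fun g hg => ?_⟩
      have := hsF g hg
      rw [hv] at this
      simpa using this
    · right
      have h2 : 2 ≤ s.card := by
        have h1 : 0 < s.card := (hne s hsX).card_pos
        omega
      obtain ⟨s₀, hs₀T, g, hg⟩ := hTrep s hsX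
      have hback : (s.image (fun v => g⁻¹ • v)) = s₀ := by
        rw [← hg, Finset.image_image]
        simp only [Function.comp_def, inv_smul_smul, Finset.image_id']
      have hs₀X : s₀ ∈ Xc := hback ▸ hinv g⁻¹ s hsX
      have hcard₀ : 2 ≤ s₀.card := by
        rwa [← hg, Finset.card_image_of_injective _ (MulAction.injective g)] at h2
      have hmem : s₀ ∈ l := hT'.mem_toFinset.mpr ⟨hs₀T, hs₀X, hcard₀⟩
      refine ⟨l.equivFin ⟨s₀, hmem⟩, g⁻¹, fun h hh => ?_⟩
      show g⁻¹ * h * g⁻¹⁻¹ ∈ stabSub ((l.equivFin.symm (l.equivFin ⟨s₀, hmem⟩) : l) : Finset V)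
      rw [Equiv.symm_apply_apply]
      show s₀.image (fun v => (g⁻¹ * h * g⁻¹⁻¹) • v) = s₀
      rw [inv_inv]
      calc s₀.image (fun v => (g⁻¹ * h * g) • v)
          = ((s₀.image (fun v => g • v)).image (fun v => h • v)).image (fun v => g⁻¹ • v) := by
            rw [Finset.image_image, Finset.image_image]
            congr 1
            funext v
            simp [Function.comp, mul_smul]
        _ = s.image (fun v => g⁻¹ • v) := by rw [hg, hsF h hh]
        _ = s₀ := hback
end

section
/- Let Σ be a graph, U a finite subset of vertices with at least two elements u ≠ u', and r ≥ d(u,u') an integer, where d is some symmetric vertex function such that any vertex at 'distance' ≤ r from both u and u' forms, together with u and u', a circuit of length 3 in the power graph Σ_r (the graph with an edge between vertices at function-value ≤ r). If Σ_r is fine, then the set {x : d(x,u) ≤ r for all u ∈ U} is finite. -/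
/-- Let `d` be a symmetric `ℕ`-valued function on a vertex set `X`, let `U` be a finite
set containing two distinct elements `u ≠ u'` with `d u u' ≤ r` (so that every vertex at
`d`-value at most `r` from both `u` and `u'` forms with them a circuit of length 3 in the
power graph `Σ_r`, which joins vertices at `d`-value at most `r`). If `Σ_r` is fine,
then the `r`-hull `{x | ∀ w ∈ U, d x w ≤ r}` of `U` is finite. -/
theorem r_hull_finite {X : Type*} (d : X → X → ℕ)
    (hsymm : ∀ a b : X, d a b = d b a) (r : ℕ)
    (U : Set X) (hUfin : U.Finite) (u u' : X) (hu : u ∈ U) (hu' : u' ∈ U)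
    (hne : u ≠ u') (hr : d u u' ≤ r)
    (hfine : (SimpleGraph.fromRel (fun x y : X => d x y ≤ r)).Fine) :
    {x : X | ∀ w ∈ U, d x w ≤ r}.Finite := by
  classical
  set G := SimpleGraph.fromRel (fun x y : X => d x y ≤ r) with hG
  have hadj : ∀ a b : X, a ≠ b → d a b ≤ r → G.Adj a b := by
    intro a b h1 h2
    rw [hG, SimpleGraph.fromRel_adj]
    exact ⟨h1, Or.inl h2⟩
  have huu' : G.Adj u u' := hadj u u' hne hr
  set T : Set X := {x : X | x ≠ u ∧ x ≠ u' ∧ d x u ≤ r ∧ d x u' ≤ r} with hT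
  have hsub : {x : X | ∀ w ∈ U, d x w ≤ r} ⊆ T ∪ {u, u'} := by
    intro x hx
    by_cases h1 : x = u
    · exact Or.inr (Or.inl h1)
    by_cases h2 : x = u'
    · exact Or.inr (Or.inr h2)
    · exact Or.inl ⟨h1, h2, hx u hu, hx u' hu'⟩
  refine Set.Finite.subset (Set.Finite.union ?_ ((Set.finite_singleton u').insert u)) hsub
  -- the map from T to cycles
  have hw : ∀ x ∈ T, G.Adj u x ∧ G.Adj x u' := by
    intro x hx
    obtain ⟨h1, h2, h3, h4⟩ := hx
    exact ⟨hadj u x (Ne.symm h1) (by rw [hsymm]; exact h3), hadj x u' h2 h4⟩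
  set f : X → G.Walk u u := fun x =>
    if h : x ∈ T then
      SimpleGraph.Walk.cons (hw x h).1
        (SimpleGraph.Walk.cons (hw x h).2
          (SimpleGraph.Walk.cons huu'.symm SimpleGraph.Walk.nil))
    else SimpleGraph.Walk.nil with hf
  have himg : f '' T ⊆ {p : G.Walk u u | p.IsCycle ∧ s(u, u') ∈ p.edges ∧ p.length ≤ 3} := by
    rintro _ ⟨x, hx, rfl⟩
    obtain ⟨h1, h2, h3, h4⟩ := hx
    have hxT : x ∈ T := ⟨h1, h2, h3, h4⟩
    simp only [hf, dif_pos hxT]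
    refine ⟨?_, ?_, ?_⟩
    · rw [SimpleGraph.Walk.isCycle_def]
      refine ⟨?_, by simp, ?_⟩
      · rw [SimpleGraph.Walk.isTrail_def]
        simp [Sym2.eq_iff, h1, h2, hne, Ne.symm h1, Ne.symm h2, Ne.symm hne]
      · simp [h1, h2, hne, Ne.symm h1, Ne.symm h2, Ne.symm hne]
    · simp [Sym2.eq_swap]
    · simp
  have hinj : Set.InjOn f T := by
    intro x hx y hy hxy
    simp only [hf, dif_pos hx, dif_pos hy] at hxy
    have := congrArg SimpleGraph.Walk.support hxy
    simpa using this
  exact Set.Finite.of_finite_image ((hfine huu' 3).subset himg) hinj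
end
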